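/- (Shift identity.) In non-stationary approximate MPI with parameters m ≥ 0 and ℓ ≥ 1 on a finite MDP, for every k ≥ 1 the shift satisfies the exact pointwise identity s_k = ∑_{j=0}^{∞} (γ^ℓ P_{k,ℓ})^{m+j} b_{k−1}, where P_{k,ℓ} = P_{π_k} P_{π_{k−1}} ⋯ P_{π_{k−ℓ+1}} (the series converges absolutely since γ^ℓ < 1 and P_{k,ℓ} is row-stochastic). -/

import Mathlib

/-!
The composed operator `T_{π_k,ℓ}` is affine with linear part `Q = γ^ℓ P_{k,ℓ}`, and `v_{π_{k,ℓ}}`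
is its fixed point. Hence, with `u = T_{π_k} v_{k-1}`, the shift is `s_k = Q^m (u - v_{π_{k,ℓ}})`,
while `b_{k-1} = u - T_{π_{k,ℓ}} u = (1 - Q)(u - v_{π_{k,ℓ}})`. Since `P_{k,ℓ}` is row-stochastic,
`Q` has `ℓ^∞`-operator norm at most `γ^ℓ < 1`, so `1 - Q` is inverted by the Neumann series
`∑ⱼ Q^j`, and `s_k = ∑ⱼ Q^(m+j) b_{k-1}`.
-/

structure MDP (X A : Type) [Fintype X] [Fintype A] where
  P : X → A → X → ℝ
  r : X → A → ℝ
  γ : ℝ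
  P_nonneg : ∀ x a y, 0 ≤ P x a y
  P_sum : ∀ x a, ∑ y, P x a y = 1
  γ_pos : 0 < γ
  γ_lt_one : γ < 1

namespace MDP

variable {X A : Type} [Fintype X] [Fintype A]

/-- Bellman operator of a stationary policy. -/
noncomputable def T (M : MDP X A) (π : X → A) (v : X → ℝ) : X → ℝ :=
  fun x => M.r x (π x) + M.γ * ∑ y, M.P x (π x) y * v y

/-- Action-value function. -/
noncomputable def Q (M : MDP X A) (v : X → ℝ) (x : X) (a : A) : ℝ :=
  M.r x a + M.γ * ∑ y, M.P x a y * v y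

/-- `π` is greedy with respect to `v` (action form). -/
def IsGreedy (M : MDP X A) (π : X → A) (v : X → ℝ) : Prop :=
  ∀ x, M.T π v x = ⨆ a : A, M.Q v x a

/-- `π` is greedy with respect to `v` (componentwise max over policies form). -/
def IsGreedyPol (M : MDP X A) (π : X → A) (v : X → ℝ) : Prop :=
  ∀ x, M.T π v x = ⨆ π' : X → A, M.T π' v x

/-- Composed Bellman operator `T_{π_k} T_{π_{k-1}} ⋯ T_{π_{k-n+1}}`. -/
noncomputable def Tcomp (M : MDP X A) (π : ℤ → X → A) : ℕ → ℤ → (X → ℝ) → (X → ℝ)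
  | 0, _ => id
  | (n+1), k => fun v => M.T (π k) (M.Tcomp π n (k-1) v)

/-- Transition kernel of a stationary policy, as a matrix. -/
def Pmat (M : MDP X A) (π : X → A) : Matrix X X ℝ :=
  Matrix.of fun x y => M.P x (π x) y

/-- Composed kernel `P_{π_k} P_{π_{k-1}} ⋯ P_{π_{k-n+1}}`. -/
noncomputable def Pcomp (M : MDP X A) [DecidableEq X] (π : ℤ → X → A) : ℕ → ℤ → Matrix X X ℝ
  | 0, _ => 1
  | (n+1), k => M.Pmat (π k) * M.Pcomp π n (k-1)

/-- `n`-fold products `(γ P_{π_1}) ⋯ (γ P_{π_n})`. -/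
def prodSet (M : MDP X A) [DecidableEq X] : ℕ → Set (Matrix X X ℝ)
  | 0 => {1}
  | (n+1) => {Q | ∃ (π : X → A) (Q' : Matrix X X ℝ), Q' ∈ M.prodSet n ∧ Q = (M.γ • M.Pmat π) * Q'}

/-- `𝕡_n`: convex combinations of `n`-fold products of discounted kernels. -/
noncomputable def Gamma (M : MDP X A) [DecidableEq X] (n : ℕ) : Set (Matrix X X ℝ) :=
  convexHull ℝ (M.prodSet n)

end MDP

/-- Residual `b_k = T_{π_{k+1}} v_k − T_{π_{k+1},ℓ} T_{π_{k+1}} v_k`. -/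
noncomputable def bres {X A : Type} [Fintype X] [Fintype A] (M : MDP X A) (π : ℤ → X → A) (ℓ : ℕ)
    (v : ℕ → X → ℝ) (k : ℕ) : X → ℝ :=
  fun x => M.T (π ((k : ℤ) + 1)) (v k) x
    - M.Tcomp π ℓ ((k : ℤ) + 1) (M.T (π ((k : ℤ) + 1)) (v k)) x

/-- Distance `d_k = v_* − v_k + ε_k`. -/
noncomputable def dres {X : Type} (vstar : X → ℝ) (v err : ℕ → X → ℝ) (k : ℕ) : X → ℝ :=
  fun x => vstar x - v k x + err k x

open Matrix

namespace Matrix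

variable {n : Type*} [Fintype n] [DecidableEq n]

section LinftyOpNorm

attribute [local instance] Matrix.linftyOpNormedRing Matrix.linftyOpNormedSpace

theorem linfty_opNorm_le_one_of_mem_rowStochastic {P : Matrix n n ℝ}
    (hP : P ∈ rowStochastic ℝ n) : ‖P‖ ≤ 1 := by
  rw [linfty_opNorm_def, NNReal.coe_le_one]
  refine Finset.sup_le fun i _ => le_of_eq ?_
  rw [← NNReal.coe_eq_one, NNReal.coe_sum]
  simp only [coe_nnnorm, Real.norm_of_nonneg (nonneg_of_mem_rowStochastic hP)]
  exact sum_row_of_mem_rowStochastic hP i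

theorem hasSum_smul_pow_mulVec_of_mem_rowStochastic {P : Matrix n n ℝ}
    (hP : P ∈ rowStochastic ℝ n) {g : ℝ} (hg : |g| < 1) {b e : n → ℝ}
    (he : e = b + (g • P) *ᵥ e) (m : ℕ) :
    HasSum (fun j => (g • P) ^ (m + j) *ᵥ b) ((g • P) ^ m *ᵥ e) := by
  set Q := g • P
  have hQ : ‖Q‖ < 1 :=
    calc ‖Q‖ ≤ ‖g‖ * ‖P‖ := norm_smul_le g P
      _ ≤ ‖g‖ * 1 := by gcongr; exact linfty_opNorm_le_one_of_mem_rowStochastic hP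
      _ < 1 := by rwa [mul_one, Real.norm_eq_abs]
  have hb : b = (1 - Q) *ᵥ e := by
    rw [sub_mulVec, one_mulVec]
    exact eq_sub_of_add_eq he.symm
  obtain ⟨S, hS⟩ := summable_geometric_of_norm_lt_one hQ
  have hinv : S * (1 - Q) = 1 := hS.tsum_eq ▸ geom_series_mul_neg Q hQ
  have hlim : (Q ^ m * S) *ᵥ b = Q ^ m *ᵥ e := by
    rw [hb, mulVec_mulVec, mul_assoc, hinv, mul_one]
  simp only [pow_add, ← hlim]
  exact (hS.mul_left (Q ^ m)).map (mulVec.addMonoidHomLeft b)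
    (continuous_id.matrix_mulVec continuous_const)

end LinftyOpNorm

theorem iterate_sub_iterate_eq_pow_mulVec {R : Type*} [CommRing R] {F : (n → R) → n → R}
    {Q : Matrix n n R} (hF : ∀ w w', F w - F w' = Q *ᵥ (w - w')) (m : ℕ) (w w' : n → R) :
    F^[m] w - F^[m] w' = Q ^ m *ᵥ (w - w') := by
  induction m with
  | zero => simp
  | succ m ih =>
    rw [Function.iterate_succ_apply', Function.iterate_succ_apply', hF, ih, mulVec_mulVec,
      ← pow_succ']

end Matrix

namespace MDP

variable {X A : Type} [Fintype X] [Fintype A] [DecidableEq X] (M : MDP X A) (π : ℤ → X → A)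

theorem Pmat_mem_rowStochastic (σ : X → A) : M.Pmat σ ∈ rowStochastic ℝ X :=
  mem_rowStochastic_iff_sum.2 ⟨fun x y => M.P_nonneg x (σ x) y, fun x => M.P_sum x (σ x)⟩

theorem Pcomp_mem_rowStochastic (n : ℕ) (k : ℤ) : M.Pcomp π n k ∈ rowStochastic ℝ X := by
  induction n generalizing k with
  | zero => exact one_mem _
  | succ n ih => exact mul_mem (M.Pmat_mem_rowStochastic _) (ih (k - 1))

omit [DecidableEq X] in
theorem T_sub_T (σ : X → A) (w w' : X → ℝ) :
    M.T σ w - M.T σ w' = (M.γ • M.Pmat σ) *ᵥ (w - w') := by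
  ext x
  simp only [T, Pi.sub_apply, mulVec, dotProduct, Pmat, Matrix.smul_apply, of_apply, smul_eq_mul,
    mul_sub, Finset.sum_sub_distrib, Finset.mul_sum, mul_assoc]
  ring

theorem Tcomp_sub_Tcomp (n : ℕ) (k : ℤ) (w w' : X → ℝ) :
    M.Tcomp π n k w - M.Tcomp π n k w' = (M.γ ^ n • M.Pcomp π n k) *ᵥ (w - w') := by
  induction n generalizing k with
  | zero => simp [Tcomp, Pcomp]
  | succ n ih =>
    simp only [Tcomp, Pcomp]
    rw [T_sub_T, ih, mulVec_mulVec, smul_mul_smul_comm, pow_succ']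

end MDP

theorem mpi_shift_identity_general
    {X A : Type} [Fintype X] [Fintype A] [DecidableEq X]
    (M : MDP X A)
    (m ℓ : ℕ) (hℓ : 1 ≤ ℓ)
    (v : ℕ → X → ℝ) (π : ℤ → X → A) (err : ℕ → X → ℝ)
    (hv : ∀ k : ℕ, 1 ≤ k →
      v k = fun x => (M.Tcomp π ℓ (k : ℤ))^[m] (M.T (π (k : ℤ)) (v (k - 1))) x + err k x)
    (vns : ℕ → X → ℝ) (hvns : ∀ k : ℕ, 1 ≤ k → M.Tcomp π ℓ (k : ℤ) (vns k) = vns k)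
    (k : ℕ) (hk : 1 ≤ k) :
    (∀ x, Summable fun j : ℕ =>
      ((M.γ ^ ℓ • M.Pcomp π ℓ (k : ℤ)) ^ (m + j)).mulVec (bres M π ℓ v (k - 1)) x) ∧
    ∀ x, v k x - vns k x - err k x =
      ∑' j : ℕ,
        ((M.γ ^ ℓ • M.Pcomp π ℓ (k : ℤ)) ^ (m + j)).mulVec (bres M π ℓ v (k - 1)) x := by
  set F := M.Tcomp π ℓ k
  set Q := M.γ ^ ℓ • M.Pcomp π ℓ k
  set u := M.T (π k) (v (k - 1))
  have hF : ∀ w w', F w - F w' = Q *ᵥ (w - w') := M.Tcomp_sub_Tcomp π ℓ k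
  have hfix : F (vns k) = vns k := hvns k hk
  have hb : bres M π ℓ v (k - 1) = u - F u := by
    ext x
    simp only [bres, Nat.cast_pred hk, sub_add_cancel, Pi.sub_apply, u, F]
  have hγℓ : |M.γ ^ ℓ| < 1 := by
    rw [abs_of_pos (pow_pos M.γ_pos ℓ)]
    exact pow_lt_one₀ M.γ_pos.le M.γ_lt_one (by omega)
  have hshift : v k - vns k - err k = Q ^ m *ᵥ (u - vns k) := by
    have hvk : v k = F^[m] u + err k := hv k hk
    rw [← iterate_sub_iterate_eq_pow_mulVec hF, Function.iterate_fixed hfix, hvk]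
    abel
  have hsum : HasSum (fun j => Q ^ (m + j) *ᵥ bres M π ℓ v (k - 1)) (v k - vns k - err k) := by
    refine hshift ▸ hasSum_smul_pow_mulVec_of_mem_rowStochastic
      (M.Pcomp_mem_rowStochastic π ℓ k) hγℓ ?_ m
    rw [hb, ← hF, hfix]
    abel
  exact ⟨fun x => (Pi.hasSum.1 hsum x).summable, fun x => (Pi.hasSum.1 hsum x).tsum_eq.symm⟩

/-- Shift identity: `s_k = ∑_{j=0}^{∞} (γ^ℓ P_{k,ℓ})^{m+j} b_{k−1}`, the series converging. -/
theorem mpi_shift_identity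
    {X A : Type} [Fintype X] [Fintype A] [Nonempty X] [Nonempty A] [DecidableEq X]
    (M : MDP X A)
    (m ℓ : ℕ) (hℓ : 1 ≤ ℓ)
    (v : ℕ → X → ℝ) (π : ℤ → X → A) (err : ℕ → X → ℝ)
    (herr0 : err 0 = fun _ => 0)
    (hgreedy : ∀ k : ℕ, 1 ≤ k → M.IsGreedyPol (π (k : ℤ)) (v (k - 1)))
    (hv : ∀ k : ℕ, 1 ≤ k →
      v k = fun x => (M.Tcomp π ℓ (k : ℤ))^[m] (M.T (π (k : ℤ)) (v (k - 1))) x + err k x)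
    (vns : ℕ → X → ℝ) (hvns : ∀ k : ℕ, 1 ≤ k → M.Tcomp π ℓ (k : ℤ) (vns k) = vns k)
    (k : ℕ) (hk : 1 ≤ k) :
    (∀ x, Summable fun j : ℕ =>
      ((M.γ ^ ℓ • M.Pcomp π ℓ (k : ℤ)) ^ (m + j)).mulVec (bres M π ℓ v (k - 1)) x) ∧
    ∀ x, v k x - vns k x - err k x =
      ∑' j : ℕ,
        ((M.γ ^ ℓ • M.Pcomp π ℓ (k : ℤ)) ^ (m + j)).mulVec (bres M π ℓ v (k - 1)) x :=
  mpi_shift_identity_general M m ℓ hℓ v π err hv vns hvns k hk
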